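/- arXiv:1905.08793 — 3 statements merged into one kernel-verified Lean document; each statement's English description precedes it below -/
import Mathlib

section
/- Let f¹, f² : ℝ^N → ℝ^{N_y} with ‖f¹(x) − f²(x)‖₂ ≤ C for all x, and let g¹, g² be the induced argmax classifiers with score o as above. If a point x satisfies o¹(x) > 2√2·C (score of x under f¹), then g²(x) = g¹(x); i.e., a uniform output perturbation smaller than the score over 2√2 cannot change the classification. -/
lemma coord_abs_le_norm {n : ℕ} (v : EuclideanSpace ℝ (Fin n)) (i : Fin n) :
    |v i| ≤ ‖v‖ := by
  have h := norm_inner_le_norm (𝕜 := ℝ) (EuclideanSpace.single i (1:ℝ)) v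
  rw [EuclideanSpace.inner_single_left, EuclideanSpace.norm_single] at h
  simpa [Real.norm_eq_abs] using h

/-- a uniform output perturbation smaller than the score over
`2√2` cannot change the classification. Here `g¹, g²` are argmax classifiers
of `f¹, f²`, with `‖f¹(x) − f²(x)‖₂ ≤ C` everywhere, and the score of `x`
under `f¹` exceeds `2√2·C`. -/
theorem stmt8 (N Ny : ℕ)
    (f₁ f₂ : EuclideanSpace ℝ (Fin N) → EuclideanSpace ℝ (Fin Ny))
    (C : ℝ) (hC : ∀ x, ‖f₁ x - f₂ x‖ ≤ C)
    (g₁ g₂ : EuclideanSpace ℝ (Fin N) → Fin Ny)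
    (hg₁ : ∀ x i, f₁ x i ≤ f₁ x (g₁ x))
    (hg₂ : ∀ x i, f₂ x i ≤ f₂ x (g₂ x))
    (x : EuclideanSpace ℝ (Fin N))
    (hscore : ∀ j, j ≠ g₁ x →
      2 * Real.sqrt 2 * C < Real.sqrt 2 * (f₁ x (g₁ x) - f₁ x j)) :
    g₂ x = g₁ x := by
  by_contra hne
  have hcoord : ∀ i, |f₁ x i - f₂ x i| ≤ C := by
    intro i
    calc |f₁ x i - f₂ x i| = ‖(f₁ x - f₂ x) i‖ := by
          simp [Real.norm_eq_abs]
      _ = |(f₁ x - f₂ x) i| := by norm_num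
      _ ≤ ‖f₁ x - f₂ x‖ := coord_abs_le_norm _ i
      _ ≤ C := hC x
  have hgap : f₁ x (g₁ x) - f₁ x (g₂ x) > 2 * C := by
    have h := hscore (g₂ x) hne
    have h2 : (0:ℝ) < Real.sqrt 2 := by positivity
    nlinarith [h2]
  have h1 := abs_le.mp (hcoord (g₁ x))
  have h2 := abs_le.mp (hcoord (g₂ x))
  have := hg₂ x (g₁ x)
  linarith [h1.1, h1.2, h2.1, h2.2]
end

section
/- (Margin implies robustness.) If a classifier g : X → Y = {1,…,N_Y} satisfies: for every training sample s_i = (x_i, y_i) ∈ S_m, every x with ‖x − x_i‖₂ < γ has g(x) = g(x_i) (margin γ > 0), and l is the 0-1 loss, then g is (N_Y · N(X; d, γ/2), 0)-robust, where N(X; d, γ/2) is the covering number of X by metric balls of radius γ/2. -/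
/-- margin implies robustness. `X` is a metric space of inputs,
labels are `Fin NY`, and the sample space is `X × Fin NY` with the 0-1 loss of
the classifier `g`. If every training sample `(xᵢ, yᵢ)` has classification
margin `γ > 0`, and `X` admits a cover by `n` open balls of radius `γ/2`
(so `n` may be the covering number `N(X; d, γ/2)`), then `g` is
`(NY·n, 0)`-robust: there is a partition of `X × Fin NY` into `NY·n` disjoint
cells such that a training sample and any sample in the same cell have equal
0-1 loss. -/
theorem stmt12 {X : Type*} [MetricSpace X] (NY : ℕ)
    (g : X → Fin NY)
    (m : ℕ) (x : Fin m → X) (y : Fin m → Fin NY)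
    (γ : ℝ) (hγ : 0 < γ)
    (hmargin : ∀ i, ∀ x' : X, dist x' (x i) < γ → g x' = g (x i))
    (n : ℕ) (c : Fin n → X)
    (hcover : ∀ p : X, ∃ j, dist p (c j) < γ / 2) :
    ∃ T : Fin (NY * n) → Set (X × Fin NY),
      (∀ s : X × Fin NY, ∃ t, s ∈ T t) ∧
      (∀ t t', t ≠ t' → Disjoint (T t) (T t')) ∧
      (∀ (i : Fin m) (s : X × Fin NY) (t : Fin (NY * n)),
        (x i, y i) ∈ T t → s ∈ T t →
          |(if g (x i) = y i then (0 : ℝ) else 1) -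
            (if g s.1 = s.2 then (0 : ℝ) else 1)| ≤ 0) := by

  classical
  set f : X → Fin n := fun p => (hcover p).choose with hf
  have hfd : ∀ p : X, dist p (c (f p)) < γ / 2 := fun p => (hcover p).choose_spec
  refine ⟨fun t => {s | (s.2, f s.1) = finProdFinEquiv.symm t}, ?_, ?_, ?_⟩
  · intro s
    exact ⟨finProdFinEquiv (s.2, f s.1), by simp⟩
  · intro t t' htt
    refine Set.disjoint_left.mpr fun s hs hs' => htt ?_
    have := hs.symm.trans hs'
    exact finProdFinEquiv.symm.injective this.symm ▸ rfl
  · intro i s t ht hs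
    have h1 : (y i, f (x i)) = ((s.2 : Fin NY), f s.1) := by
      exact ht.trans hs.symm
    have hy : y i = s.2 := congrArg Prod.fst h1
    have hx : f (x i) = f s.1 := congrArg Prod.snd h1
    have hd : dist s.1 (x i) < γ := by
      calc dist s.1 (x i) ≤ dist s.1 (c (f s.1)) + dist (x i) (c (f s.1)) :=
            dist_triangle_right _ _ _
        _ < γ / 2 + γ / 2 := add_lt_add (hfd s.1) (hx ▸ hfd (x i))
        _ = γ := by ring
    have hg : g s.1 = g (x i) := hmargin i s.1 hd
    rw [hg, ← hy]
    simp
end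

section
/- (Multi-layer perturbation propagation, Neyshabur et al. form.) Let f_w be an L-layer ReLU network with weights W₁,…,W_L, and let H₁,…,H_L be perturbation matrices with ‖H_i‖₂ ≤ (1/L)‖W_i‖₂ for all i. Then for all x with ‖x‖₂ ≤ D, ‖f_{w}(x) − f_{w+h}(x)‖₂ ≤ e·D·(∏_i‖W_i‖₂)·Σ_i ‖H_i‖₂/‖W_i‖₂. -/
/-!
Write `f⁽ᵏ⁾` for the first `k` layers and `Δₖ = f_w⁽ᵏ⁾(x) − f_{w+h}⁽ᵏ⁾(x)`. ReLU is 1-Lipschitz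
and fixes `0`, so `‖Δₖ₊₁‖ ≤ ‖Wₖ‖‖Δₖ‖ + ‖Hₖ‖‖f_{w+h}⁽ᵏ⁾(x)‖`. Since `‖Wᵢ + Hᵢ‖ ≤ (1 + 1/L)‖Wᵢ‖`,
the perturbed partial network has norm at most `(1 + 1/L)ᵏ (∏_{i<k} ‖Wᵢ‖) ‖x‖`; unrolling the
recursion gives `(1 + 1/L)ᴸ ‖x‖ (∏ ‖Wᵢ‖) Σ ‖Hᵢ‖/‖Wᵢ‖`, and `(1 + 1/L)ᴸ ≤ e`.
-/

noncomputable section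

def reluV {n : ℕ} (v : EuclideanSpace ℝ (Fin n)) : EuclideanSpace ℝ (Fin n) :=
  WithLp.toLp 2 (fun i => max 0 (v i))

/-- A composition of ReLU layers `z ↦ ρ(W z)`. -/
def net (dims : ℕ → ℕ)
    (W : ∀ i : ℕ, EuclideanSpace ℝ (Fin (dims i)) →L[ℝ] EuclideanSpace ℝ (Fin (dims (i + 1)))) :
    (L : ℕ) → EuclideanSpace ℝ (Fin (dims 0)) → EuclideanSpace ℝ (Fin (dims L))
  | 0 => id
  | (L + 1) => fun x => reluV (W L (net dims W L x))

lemma norm_reluV_sub_reluV_le {n : ℕ} (u v : EuclideanSpace ℝ (Fin n)) :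
    ‖reluV u - reluV v‖ ≤ ‖u - v‖ := by
  rw [EuclideanSpace.norm_eq, EuclideanSpace.norm_eq]
  refine Real.sqrt_le_sqrt (Finset.sum_le_sum fun i _ => ?_)
  have hi : (reluV u - reluV v) i = max (u i) 0 - max (v i) 0 := by
    simp [reluV, max_comm]
  rw [hi, PiLp.sub_apply, Real.norm_eq_abs, Real.norm_eq_abs]
  exact pow_le_pow_left₀ (abs_nonneg _) (abs_max_sub_max_le_abs (u i) (v i) 0) 2

lemma reluV_zero {n : ℕ} : reluV (0 : EuclideanSpace ℝ (Fin n)) = 0 := by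
  ext i
  simp [reluV]

lemma norm_reluV_le {n : ℕ} (u : EuclideanSpace ℝ (Fin n)) : ‖reluV u‖ ≤ ‖u‖ := by
  simpa [reluV_zero] using norm_reluV_sub_reluV_le u 0

lemma norm_net_le {dims : ℕ → ℕ} (W : ∀ i : ℕ,
      EuclideanSpace ℝ (Fin (dims i)) →L[ℝ] EuclideanSpace ℝ (Fin (dims (i + 1))))
    (k : ℕ) (x : EuclideanSpace ℝ (Fin (dims 0))) :
    ‖net dims W k x‖ ≤ (∏ i ∈ Finset.range k, ‖W i‖) * ‖x‖ := by
  induction k with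
  | zero => simp [net]
  | succ k ih =>
    calc ‖reluV (W k (net dims W k x))‖ ≤ ‖W k‖ * ‖net dims W k x‖ :=
          (norm_reluV_le _).trans ((W k).le_opNorm _)
      _ ≤ ‖W k‖ * ((∏ i ∈ Finset.range k, ‖W i‖) * ‖x‖) := by gcongr
      _ = (∏ i ∈ Finset.range (k + 1), ‖W i‖) * ‖x‖ := by rw [Finset.prod_range_succ]; ring

section Perturbation

variable {dims : ℕ → ℕ}
  {W H : ∀ i : ℕ, EuclideanSpace ℝ (Fin (dims i)) →L[ℝ] EuclideanSpace ℝ (Fin (dims (i + 1)))}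
  {ε : ℝ}

lemma norm_add_le_one_add_mul {i : ℕ} (hH : ‖H i‖ ≤ ε * ‖W i‖) :
    ‖W i + H i‖ ≤ (1 + ε) * ‖W i‖ := by
  linarith [norm_add_le (W i) (H i)]

lemma norm_net_add_le (k : ℕ) (hH : ∀ i < k, ‖H i‖ ≤ ε * ‖W i‖)
    (x : EuclideanSpace ℝ (Fin (dims 0))) :
    ‖net dims (fun i => W i + H i) k x‖ ≤ (1 + ε) ^ k * (∏ i ∈ Finset.range k, ‖W i‖) * ‖x‖ := by
  calc ‖net dims (fun i => W i + H i) k x‖ ≤ (∏ i ∈ Finset.range k, ‖W i + H i‖) * ‖x‖ :=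
        norm_net_le _ k x
    _ ≤ (∏ i ∈ Finset.range k, (1 + ε) * ‖W i‖) * ‖x‖ := by
        gcongr with i hi
        exact norm_add_le_one_add_mul (hH i (Finset.mem_range.mp hi))
    _ = (1 + ε) ^ k * (∏ i ∈ Finset.range k, ‖W i‖) * ‖x‖ := by
        rw [Finset.prod_mul_distrib, Finset.prod_const, Finset.card_range]

/-- The hypothesis forces `H i = 0` when `W i = 0`, so the junk value `x / 0 = 0` is harmless. -/
lemma norm_eq_div_mul_norm {i : ℕ} (hH : ‖H i‖ ≤ ε * ‖W i‖) :
    ‖H i‖ = ‖H i‖ / ‖W i‖ * ‖W i‖ := by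
  rcases eq_or_ne ‖W i‖ 0 with h0 | h0
  · have : ‖H i‖ = 0 := le_antisymm (by simpa [h0] using hH) (norm_nonneg _)
    simp [this]
  · rw [div_mul_cancel₀ _ h0]

lemma norm_net_sub_net_add_le (hε : 0 ≤ ε) (k : ℕ) (hH : ∀ i < k, ‖H i‖ ≤ ε * ‖W i‖)
    (x : EuclideanSpace ℝ (Fin (dims 0))) :
    ‖net dims W k x - net dims (fun i => W i + H i) k x‖ ≤
      (1 + ε) ^ k * ‖x‖ * (∏ i ∈ Finset.range k, ‖W i‖) *
        ∑ i ∈ Finset.range k, ‖H i‖ / ‖W i‖ := by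
  induction k with
  | zero => simp [net]
  | succ k ih =>
    have hHk := hH k k.lt_succ_self
    set y := net dims W k x
    set y' := net dims (fun i => W i + H i) k x
    have hy' : ‖y'‖ ≤ (1 + ε) ^ k * (∏ i ∈ Finset.range k, ‖W i‖) * ‖x‖ :=
      norm_net_add_le k (fun i hi => hH i (hi.trans k.lt_succ_self)) x
    have hdiff := ih fun i hi => hH i (hi.trans k.lt_succ_self)
    have hsplit : W k y - (W k + H k) y' = W k (y - y') - H k y' := by
      simp only [add_apply, map_sub]
      abel
    have hsum : 0 ≤ ∑ i ∈ Finset.range (k + 1), ‖H i‖ / ‖W i‖ :=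
      Finset.sum_nonneg fun i _ => by positivity
    calc ‖reluV (W k y) - reluV ((W k + H k) y')‖
        ≤ ‖W k (y - y') - H k y'‖ := hsplit ▸ norm_reluV_sub_reluV_le _ _
      _ ≤ ‖W k‖ * ‖y - y'‖ + ‖H k‖ * ‖y'‖ :=
          (norm_sub_le _ _).trans (add_le_add ((W k).le_opNorm _) ((H k).le_opNorm _))
      _ ≤ ‖W k‖ * ((1 + ε) ^ k * ‖x‖ * (∏ i ∈ Finset.range k, ‖W i‖) *
              ∑ i ∈ Finset.range k, ‖H i‖ / ‖W i‖) +
            ‖H k‖ * ((1 + ε) ^ k * (∏ i ∈ Finset.range k, ‖W i‖) * ‖x‖) := by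
          gcongr
      _ = (1 + ε) ^ k * ‖x‖ * (∏ i ∈ Finset.range (k + 1), ‖W i‖) *
            ∑ i ∈ Finset.range (k + 1), ‖H i‖ / ‖W i‖ := by
          rw [norm_eq_div_mul_norm hHk, Finset.prod_range_succ, Finset.sum_range_succ]
          ring
      _ ≤ (1 + ε) ^ (k + 1) * ‖x‖ * (∏ i ∈ Finset.range (k + 1), ‖W i‖) *
            ∑ i ∈ Finset.range (k + 1), ‖H i‖ / ‖W i‖ := by
          gcongr
          · linarith
          · exact k.le_succ

end Perturbation

/-- Neyshabur et al. perturbation bound: if each perturbation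
satisfies `‖Hᵢ‖₂ ≤ (1/L)‖Wᵢ‖₂`, then for every input of norm at most `D`,
`‖f_w(x) − f_{w+h}(x)‖₂ ≤ e·D·(∏ᵢ‖Wᵢ‖₂)·Σᵢ ‖Hᵢ‖₂/‖Wᵢ‖₂`. -/
theorem stmt16 (dims : ℕ → ℕ) (L : ℕ)
    (W H : ∀ i : ℕ, EuclideanSpace ℝ (Fin (dims i)) →L[ℝ] EuclideanSpace ℝ (Fin (dims (i + 1))))
    (hH : ∀ i < L, ‖H i‖ ≤ (1 / (L : ℝ)) * ‖W i‖)
    (D : ℝ) (x : EuclideanSpace ℝ (Fin (dims 0))) (hx : ‖x‖ ≤ D) :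
    ‖net dims W L x - net dims (fun i => W i + H i) L x‖ ≤
      Real.exp 1 * D * (∏ i ∈ Finset.range L, ‖W i‖) *
        ∑ i ∈ Finset.range L, ‖H i‖ / ‖W i‖ := by
  calc ‖net dims W L x - net dims (fun i => W i + H i) L x‖
      ≤ (1 + 1 / (L : ℝ)) ^ L * ‖x‖ * (∏ i ∈ Finset.range L, ‖W i‖) *
          ∑ i ∈ Finset.range L, ‖H i‖ / ‖W i‖ :=
        norm_net_sub_net_add_le (by positivity) L hH x
    _ ≤ Real.exp 1 * D * (∏ i ∈ Finset.range L, ‖W i‖) *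
          ∑ i ∈ Finset.range L, ‖H i‖ / ‖W i‖ := by
        gcongr
        rw [one_div]
        exact Real.one_add_inv_pow_le_exp
end
end
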